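/- Let k and ℓ be integers with 3 ≤ k ≤ ℓ and let H_{k,ℓ} be the graph described in the context. Then every total dominating set of H_{k,ℓ} that contains none of the vertices u, v, w has at least 2(k+ℓ−2) vertices. -/

import Mathlib

/-- The three special vertices `u`, `v`, `w`. -/
inductive UVW : Type
  | u | v | w
deriving DecidableEq

/-- Vertices of `H_{k,ℓ}`: triangle vertices `t_{i,j}` as `Sum.inl (i,j)`
(0-indexed, `i : Fin (k+ℓ-2)`, `j : Fin 3`), plus `u`, `v`, `w`. -/
abbrev HklV (k l : ℕ) := (Fin (k + l - 2) × Fin 3) ⊕ UVW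

/-- Edge relation of `H_{k,ℓ}`: triangles on each `t_{i,·}`; the edge `uv`;
`u` adjacent to `t_{i,1}` (0-indexed `j = 0`) for all `i` and to `t_{i,2}`,
`t_{i,3}` for `i ≥ k` (0-indexed `k-1 ≤ i.val`); `v` adjacent to `t_{i,1}`,
`t_{i,2}` for all `i` and to `t_{i,3}` for `i ≥ k`; `w` adjacent to `t_{i,1}`,
`t_{i,2}` for all `i` and to `t_{i,3}` for `i ≤ k-1` (0-indexed
`i.val < k-1`); `w` adjacent to neither `u` nor `v`. -/
def HklRel (k l : ℕ) : HklV k l → HklV k l → Prop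
  | .inl p, .inl q => p.1 = q.1
  | .inr .u, .inl p =>
      p.2.val = 0 ∨ (k - 1 ≤ p.1.val ∧ (p.2.val = 1 ∨ p.2.val = 2))
  | .inr .v, .inl p =>
      p.2.val = 0 ∨ p.2.val = 1 ∨ (k - 1 ≤ p.1.val ∧ p.2.val = 2)
  | .inr .w, .inl p =>
      p.2.val = 0 ∨ p.2.val = 1 ∨ (p.1.val < k - 1 ∧ p.2.val = 2)
  | .inr .u, .inr .v => True
  | _, _ => False

/-- The graph `H_{k,ℓ}`. -/
def Hkl (k l : ℕ) : SimpleGraph (HklV k l) := SimpleGraph.fromRel (HklRel k l)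

/-- `D` is a total dominating set of `G`. -/
def IsTotalDomSet {V : Type*} (G : SimpleGraph V) (D : Finset V) : Prop :=
  ∀ v : V, ∃ d ∈ D, G.Adj v d

/-!
Since `u`, `v`, `w` are not in `D`, every vertex of the triangle `t_{i,·}` is dominated from inside
that triangle. A vertex of `D` dominating `t_{i,1}` must itself be dominated by a second vertex of
`D`, again in the same triangle, so `D` meets each of the `k + ℓ - 2` disjoint triangles at least twice.
-/

open Finset

def triangleIndex {k l : ℕ} : HklV k l → Option (Fin (k + l - 2)) :=
  Sum.elim (fun p => some p.1) fun _ => none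

theorem IsTotalDomSet.one_lt_card_filter {V : Type*} {G : SimpleGraph V} {D : Finset V}
    (hD : IsTotalDomSet G D) {P : V → Prop} [DecidablePred P]
    (hP : ∀ x, P x → ∀ d ∈ D, G.Adj x d → P d) (hne : ∃ x, P x) :
    1 < #{d ∈ D | P d} := by
  obtain ⟨x, hx⟩ := hne
  obtain ⟨d, hdD, hxd⟩ := hD x
  have hd := hP x hx d hdD hxd
  obtain ⟨e, heD, hde⟩ := hD d
  have he := hP d hd e heD hde
  exact one_lt_card.2 ⟨d, mem_filter.2 ⟨hdD, hd⟩, e, mem_filter.2 ⟨heD, he⟩, hde.ne⟩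

theorem Hkl.fst_eq_of_adj_inl {k l : ℕ} {p q : Fin (k + l - 2) × Fin 3}
    (h : (Hkl k l).Adj (.inl p) (.inl q)) : p.1 = q.1 := by
  simp only [Hkl, SimpleGraph.fromRel_adj, HklRel] at h
  exact h.2.elim id Eq.symm

theorem Hkl.triangleIndex_eq_of_adj {k l : ℕ} {x : HklV k l} {q : Fin (k + l - 2) × Fin 3}
    {i : Fin (k + l - 2)} (h : (Hkl k l).Adj x (.inl q)) (hx : triangleIndex x = some i) :
    triangleIndex (.inl q : HklV k l) = some i := by
  obtain p | _ := x
  · simp only [triangleIndex, Sum.elim_inl, Option.some.injEq] at hx ⊢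
    rw [← hx, fst_eq_of_adj_inl h]
  · simp [triangleIndex] at hx

theorem stmt15_general (k l : ℕ)
    (D : Finset (HklV k l)) (hD : IsTotalDomSet (Hkl k l) D)
    (hu : (Sum.inr UVW.u : HklV k l) ∉ D)
    (hv : (Sum.inr UVW.v : HklV k l) ∉ D)
    (hw : (Sum.inr UVW.w : HklV k l) ∉ D) :
    2 * (k + l - 2) ≤ D.card := by
  have hinl : ∀ d ∈ D, ∃ q, d = Sum.inl q := by
    rintro (q | _ | _ | _) hd
    exacts [⟨q, rfl⟩, (hu hd).elim, (hv hd).elim, (hw hd).elim]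
  have hmaps : ∀ d ∈ D, triangleIndex d ∈ univ.map .some := by
    intro d hd
    obtain ⟨q, rfl⟩ := hinl d hd
    simp [triangleIndex]
  have htriangle : ∀ o ∈ univ.map .some, 2 ≤ #{d ∈ D | triangleIndex d = o} := by
    simp only [mem_map, mem_univ, true_and, Function.Embedding.some_apply]
    rintro _ ⟨i, rfl⟩
    refine hD.one_lt_card_filter ?_ ⟨.inl (i, 0), rfl⟩
    intro x hx d hd hxd
    obtain ⟨q, rfl⟩ := hinl d hd
    exact Hkl.triangleIndex_eq_of_adj hxd hx
  simpa using mul_card_image_le_card_of_maps_to hmaps 2 htriangle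

/-- Every total dominating set of `H_{k,ℓ}` containing none of `u`, `v`, `w`
has at least `2(k+ℓ-2)` vertices. -/
theorem stmt15 (k l : ℕ) (hk : 3 ≤ k) (hkl : k ≤ l)
    (D : Finset (HklV k l)) (hD : IsTotalDomSet (Hkl k l) D)
    (hu : (Sum.inr UVW.u : HklV k l) ∉ D)
    (hv : (Sum.inr UVW.v : HklV k l) ∉ D)
    (hw : (Sum.inr UVW.w : HklV k l) ∉ D) :
    2 * (k + l - 2) ≤ D.card :=
  stmt15_general k l D hD hu hv hw
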